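/- arXiv:1604.03164 — 9 statements merged into one kernel-verified Lean document; each statement's English description precedes it below -/
import Mathlib

section
/- Let (f_n) and (g_n) be sequences of real numbers and let (P_n) be a sequence of real polynomials satisfying P_n'(x) = f_n·P_{n-1}(x) + g_n·(x-1)·P_{n-1}'(x) for all n ≥ 1. Then for every r ≥ 1 and every n ≥ r, P_n^{(r)}(1) = (∏_{k=0}^{r-1} (f_{n-k} + (r-1-k)·g_{n-k})) · P_{n-r}(1). -/
open Polynomial

lemma iter_deriv_add (r : ℕ) (p q : Polynomial ℝ) :
    derivative^[r] (p + q) = derivative^[r] p + derivative^[r] q := by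
  induction r generalizing p q with
  | zero => simp
  | succ r ih => simp [Function.iterate_succ_apply, derivative_add, ih]

lemma aux_xsub (m : ℕ) : ∀ Q : Polynomial ℝ,
    (derivative^[m+1] ((X - 1) * Q)).eval 1 = (m + 1 : ℝ) * (derivative^[m] Q).eval 1 := by
  induction m with
  | zero =>
    intro Q
    simp [derivative_mul]
  | succ m ih =>
    intro Q
    have h1 : derivative ((X - 1 : Polynomial ℝ) * Q) = Q + (X - 1) * derivative Q := by
      rw [derivative_mul]; simp
    rw [Function.iterate_succ_apply, h1]
    rw [iter_deriv_add]
    rw [eval_add, ih (derivative Q), ← Function.iterate_succ_apply]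
    push_cast
    ring

lemma step_lemma (f g : ℕ → ℝ) (P : ℕ → Polynomial ℝ)
    (hrec : ∀ n : ℕ, 1 ≤ n →
      derivative (P n) =
        C (f n) * P (n - 1) + C (g n) * (X - 1) * derivative (P (n - 1)))
    (n r : ℕ) (hn : 1 ≤ n) :
    (derivative^[r+1] (P n)).eval 1 =
      (f n + (r : ℝ) * g n) * (derivative^[r] (P (n - 1))).eval 1 := by
  rw [Function.iterate_succ_apply, hrec n hn]
  rw [mul_assoc]
  rw [iter_deriv_add]
  rw [iterate_derivative_C_mul, iterate_derivative_C_mul]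
  cases r with
  | zero => simp
  | succ s =>
    simp only [eval_add, eval_mul, eval_C]
    rw [aux_xsub s (derivative (P (n-1))), ← Function.iterate_succ_apply]
    push_cast
    ring

/-- Under the recurrence `P_n' = f_n · P_{n-1} + g_n · (x-1) · P_{n-1}'`,
for every `r ≥ 1` and every `n ≥ r`,
`P_n^{(r)}(1) = (∏_{k=0}^{r-1} (f_{n-k} + (r-1-k)·g_{n-k})) · P_{n-r}(1)`. -/
theorem stmt_1 (f g : ℕ → ℝ) (P : ℕ → Polynomial ℝ)
    (hrec : ∀ n : ℕ, 1 ≤ n →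
      derivative (P n) =
        C (f n) * P (n - 1) + C (g n) * (X - 1) * derivative (P (n - 1))) :
    ∀ r : ℕ, 1 ≤ r → ∀ n : ℕ, r ≤ n →
      (derivative^[r] (P n)).eval 1 =
        (∏ k ∈ Finset.range r, (f (n - k) + ((r : ℝ) - 1 - (k : ℝ)) * g (n - k))) *
          (P (n - r)).eval 1 := by
  intro r hr
  induction r, hr using Nat.le_induction with
  | base =>
    intro n hn
    have := step_lemma f g P hrec n 0 hn
    simpa using this
  | succ r hr ih =>
    intro n hn
    have hn1 : 1 ≤ n := le_trans (by omega) hn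
    have h1 := step_lemma f g P hrec n r hn1
    have h2 := ih (n - 1) (by omega)
    rw [h1, h2]
    rw [Finset.prod_range_succ']
    have hsub : ∀ k : ℕ, n - 1 - k = n - (k + 1) := fun k => by omega
    have hsub2 : n - 1 - r = n - (r + 1) := by omega
    rw [hsub2]
    have hprod : ∏ k ∈ Finset.range r,
        (f (n - 1 - k) + ((r : ℝ) - 1 - (k : ℝ)) * g (n - 1 - k))
        = ∏ k ∈ Finset.range r,
        (f (n - (k + 1)) + (((r : ℕ) + 1 : ℝ) - 1 - ((k : ℕ) + 1 : ℝ)) * g (n - (k + 1))) := by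
      apply Finset.prod_congr rfl
      intro k _
      rw [hsub k]
      push_cast
      ring_nf
    rw [hprod]
    simp only [Nat.sub_zero]
    push_cast
    ring
end

section
/- Let (f_n) and (g_n) be sequences of real numbers and let (P_n) be a sequence of real polynomials satisfying P_n'(x) = f_n·P_{n-1}(x) + g_n·(x-1)·P_{n-1}'(x) for all n ≥ 1, with P_n(1) ≠ 0 and f_n ≠ 0 for all n. Assume that g_n/f_n → 0 as n → ∞ and that f_n·P_{n-1}(1)/P_n(1) → c for some constant c > 0. Then for every integer r ≥ 1, the ratio P_n^{(r)}(1)/P_n(1) converges to c^r as n → ∞. -/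
open Polynomial Filter

lemma aux_iter (Q : Polynomial ℝ) : ∀ k : ℕ,
    derivative^[k+1] ((X - C 1) * Q) =
      (X - C 1) * derivative^[k+1] Q + C ((k:ℝ)+1) * derivative^[k] Q := by
  intro k
  induction k with
  | zero => simp [derivative_mul]; ring
  | succ t ih =>
    rw [Function.iterate_succ_apply', ih, derivative_add, derivative_mul, derivative_mul,
      derivative_C, zero_mul, zero_add,
      ← Function.iterate_succ_apply' derivative (t+1) Q,
      ← Function.iterate_succ_apply' derivative t Q]
    have hd : derivative (X - C 1 : Polynomial ℝ) = 1 := by simp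
    rw [hd, one_mul, Nat.cast_succ, show ((t:ℝ)+1+1) = ((t:ℝ)+1)+1 by ring, map_add, C_1]
    set A := derivative^[t+1] Q
    set B := derivative^[t+1+1] Q
    simp only [map_add, map_ofNat, map_one]
    ring

lemma key (f g : ℕ → ℝ) (P : ℕ → Polynomial ℝ)
    (hrec : ∀ n : ℕ, 1 ≤ n →
      derivative (P n) =
        C (f n) * P (n - 1) + C (g n) * (X - 1) * derivative (P (n - 1)))
    (n : ℕ) (hn : 1 ≤ n) (r : ℕ) :
    (derivative^[r+1] (P n)).eval 1 =
      (f n + r * g n) * (derivative^[r] (P (n-1))).eval 1 := by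
  have h := hrec n hn
  rw [Function.iterate_succ_apply, h]
  have h1 : (X - 1 : Polynomial ℝ) = X - C 1 := by simp
  rw [h1, mul_assoc]
  cases r with
  | zero => simp
  | succ t =>
    rw [iterate_map_add, iterate_derivative_C_mul, iterate_derivative_C_mul,
      aux_iter (derivative (P (n-1))) t,
      ← Function.iterate_succ_apply derivative t]
    simp

    ring

/-- Under the recurrence `P_n' = f_n · P_{n-1} + g_n · (x-1) · P_{n-1}'`,
with `P_n(1) ≠ 0`, `f_n ≠ 0`, `g_n/f_n → 0`, and `f_n · P_{n-1}(1)/P_n(1) → c > 0`,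
for every `r ≥ 1` the ratio `P_n^{(r)}(1)/P_n(1)` converges to `c^r`. -/
theorem stmt_2 (f g : ℕ → ℝ) (P : ℕ → Polynomial ℝ) (c : ℝ)
    (hrec : ∀ n : ℕ, 1 ≤ n →
      derivative (P n) =
        C (f n) * P (n - 1) + C (g n) * (X - 1) * derivative (P (n - 1)))
    (hP1 : ∀ n, (P n).eval 1 ≠ 0)
    (hf : ∀ n, f n ≠ 0)
    (hgf : Tendsto (fun n => g n / f n) atTop (nhds 0))
    (hc : c > 0)
    (hfP : Tendsto (fun n => f n * (P (n - 1)).eval 1 / (P n).eval 1) atTop (nhds c)) :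
    ∀ r : ℕ, 1 ≤ r →
      Tendsto (fun n => (derivative^[r] (P n)).eval 1 / (P n).eval 1) atTop
        (nhds (c ^ r)) := by
  intro r hr
  induction r, hr using Nat.le_induction with
  | base =>
    rw [pow_one]
    apply hfP.congr'
    filter_upwards [eventually_ge_atTop 1] with n hn
    rw [show (derivative^[1] (P n)) = derivative^[0+1] (P n) from rfl,
      key f g P hrec n hn 0]
    simp
  | succ r hr ih =>
    have hshift : Tendsto (fun n => (derivative^[r] (P (n-1))).eval 1 / (P (n-1)).eval 1)
        atTop (nhds (c ^ r)) := ih.comp (tendsto_sub_atTop_nat 1)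
    have hone : Tendsto (fun n => 1 + (r:ℝ) * (g n / f n)) atTop (nhds 1) := by
      have := (hgf.const_mul (r:ℝ)).const_add 1
      simpa using this
    have hlim := (hone.mul hfP).mul hshift
    rw [one_mul] at hlim
    rw [pow_succ']
    apply hlim.congr'
    filter_upwards [eventually_ge_atTop 1] with n hn
    rw [key f g P hrec n hn r]
    have h1 := hP1 n
    have h2 := hP1 (n-1)
    have h3 := hf n
    field_simp
end

section
/- Let (f_n) and (g_n) be sequences of real numbers and let (P_n) be a sequence of real polynomials with nonnegative coefficients satisfying P_n'(x) = f_n·P_{n-1}(x) + g_n·(x-1)·P_{n-1}'(x) for all n ≥ 1, with P_n(1) > 0 and f_n ≠ 0 for all n. Assume g_n/f_n → 0 as n → ∞ and f_n·P_{n-1}(1)/P_n(1) → c for some constant c > 0. Then for every integer k ≥ 0, the normalized coefficient (coefficient of x^k in P_n)/P_n(1) converges to e^{-c}·c^k/k! as n → ∞; that is, the random variables X_n with P(X_n = k) = [x^k]P_n(x)/P_n(1) converge in distribution to a Poisson random variable with parameter c. -/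
open Polynomial Filter

section AuxPoisson
open Finset

lemma hasse_eval_one (Q : Polynomial ℝ) (j N : ℕ) (hN : Q.natDegree < N) :
    (hasseDeriv j Q).eval 1 = ∑ m ∈ Finset.range (N + j), (m.choose j : ℝ) * Q.coeff m := by
  have hdeg : (hasseDeriv j Q).natDegree < N + j :=
    lt_of_le_of_lt (natDegree_hasseDeriv_le Q j) (by omega)
  rw [eval_eq_sum_range' hdeg]
  simp only [one_pow, mul_one, hasseDeriv_coeff]
  rw [Finset.range_eq_Ico, ← Finset.sum_Ico_consecutive (fun m => (m.choose j : ℝ) * Q.coeff m)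
    (Nat.zero_le j) (by omega : j ≤ N + j)]
  have h1 : ∑ m ∈ Finset.Ico 0 j, (m.choose j : ℝ) * Q.coeff m = 0 := by
    apply Finset.sum_eq_zero
    intro m hm
    simp only [Finset.mem_Ico] at hm
    rw [Nat.choose_eq_zero_of_lt hm.2]
    simp
  rw [h1, zero_add]
  conv_rhs => rw [Finset.sum_Ico_eq_sum_range]
  have h2 : N + j - j = N := by omega
  rw [h2]
  conv_lhs => rw [← Finset.sum_Ico_consecutive
    (fun i => ((i + j).choose j : ℝ) * Q.coeff (i + j)) (Nat.zero_le N) (by omega : N ≤ N + j)]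
  have h3 : ∑ i ∈ Finset.Ico N (N + j), ((i + j).choose j : ℝ) * Q.coeff (i + j) = 0 := by
    apply Finset.sum_eq_zero
    intro i hi
    simp only [Finset.mem_Ico] at hi
    rw [Q.coeff_eq_zero_of_natDegree_lt (by omega)]
    simp
  rw [h3, add_zero, ← Finset.range_eq_Ico]
  apply Finset.sum_congr rfl
  intro i _
  simp [add_comm j i]

lemma alt_partial (M L : ℕ) (hM : 1 ≤ M) :
    ∑ i ∈ Finset.range (L + 1), (-1 : ℝ) ^ i * (M.choose i) = (-1) ^ L * ((M - 1).choose L) := by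
  induction L with
  | zero => simp
  | succ L ih =>
    rw [Finset.sum_range_succ, ih]
    have h : M.choose (L + 1) = (M - 1).choose L + (M - 1).choose (L + 1) := by
      conv_lhs => rw [show M = (M - 1) + 1 by omega]
      exact Nat.choose_succ_succ _ _
    rw [h]
    push_cast
    ring

lemma choose_mul_real (m k i : ℕ) (hki : k ≤ i) :
    (m.choose i : ℝ) * (i.choose k) = (m.choose k) * ((m - k).choose (i - k)) := by
  rcases lt_or_ge m k with hmk | hmk
  · rw [Nat.choose_eq_zero_of_lt (by omega : m < i), Nat.choose_eq_zero_of_lt hmk]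
    simp
  · rcases le_or_gt i m with him | him
    · exact_mod_cast congrArg Nat.cast (Nat.choose_mul (n := m) hki)
    · rw [Nat.choose_eq_zero_of_lt him, Nat.choose_eq_zero_of_lt (by omega : m - k < i - k)]
      simp

lemma Ssum (m k L : ℕ) (hkm : k < m) :
    ∑ i ∈ Finset.range (k + 1 + L), (-1 : ℝ) ^ (i - k) * (i.choose k) * (m.choose i)
      = (-1) ^ L * (m.choose k) * ((m - k - 1).choose L) := by
  rw [Finset.range_eq_Ico,
    ← Finset.sum_Ico_consecutive (fun i => (-1 : ℝ) ^ (i - k) * (i.choose k) * (m.choose i))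
      (Nat.zero_le k) (by omega : k ≤ k + 1 + L)]
  have h1 : ∑ i ∈ Finset.Ico 0 k, (-1 : ℝ) ^ (i - k) * (i.choose k) * (m.choose i) = 0 := by
    apply Finset.sum_eq_zero
    intro i hi
    simp only [Finset.mem_Ico] at hi
    rw [Nat.choose_eq_zero_of_lt hi.2]
    simp
  rw [h1, zero_add, Finset.sum_Ico_eq_sum_range]
  have h2 : k + 1 + L - k = L + 1 := by omega
  rw [h2]
  have h3 : ∀ t, (-1 : ℝ) ^ (k + t - k) * ((k + t).choose k) * (m.choose (k + t))
      = (m.choose k) * ((-1 : ℝ) ^ t * ((m - k).choose t)) := by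
    intro t
    have : k + t - k = t := by omega
    rw [this]
    have := choose_mul_real m k (k + t) (by omega)
    have ht : k + t - k = t := by omega
    rw [ht] at this
    calc (-1 : ℝ) ^ t * ((k + t).choose k) * (m.choose (k + t))
        = (-1 : ℝ) ^ t * ((m.choose (k + t)) * ((k + t).choose k)) := by ring
      _ = (-1 : ℝ) ^ t * ((m.choose k) * ((m - k).choose t)) := by rw [this]
      _ = (m.choose k) * ((-1 : ℝ) ^ t * ((m - k).choose t)) := by ring
  simp only [h3]
  rw [← Finset.mul_sum, alt_partial (m - k) L (by omega)]
  ring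

lemma inversion (Q : Polynomial ℝ) (k N : ℕ) (hN : Q.natDegree < N) :
    Q.coeff k = ∑ i ∈ Finset.range N,
      (-1 : ℝ) ^ (i - k) * (i.choose k) * (hasseDeriv i Q).eval 1 := by
  conv_lhs => rw [← sum_taylor_eq Q 1]
  rw [Polynomial.sum_over_range' (taylor 1 Q) (fun n => by simp) N (by rwa [natDegree_taylor])]
  rw [finset_sum_coeff]
  apply Finset.sum_congr rfl
  intro i _
  rw [coeff_C_mul, taylor_coeff]
  have hx : (X - C (1 : ℝ)) = X + C (-1) := by rw [map_neg, sub_eq_add_neg]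
  rw [hx, coeff_X_add_C_pow]
  ring

lemma error_bound (Q : Polynomial ℝ) (hq : ∀ m, 0 ≤ Q.coeff m) (k J : ℕ) :
    |Q.coeff k - ∑ j ∈ Finset.range (J + 1),
        (-1 : ℝ) ^ j * ((k + j).choose k) * (hasseDeriv (k + j) Q).eval 1|
      ≤ ((k + J + 1).choose k) * (hasseDeriv (k + J + 1) Q).eval 1 := by
  set N := max (Q.natDegree + 1) (k + J + 2) with hNdef
  have hN : Q.natDegree < N := lt_of_lt_of_le (Nat.lt_succ_self _) (le_max_left _ _)
  have hN2 : k + J + 2 ≤ N := le_max_right _ _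
  have hh : ∀ i, (hasseDeriv i Q).eval 1
      = ∑ m ∈ Finset.range N, (m.choose i : ℝ) * Q.coeff m := by
    intro i
    rw [hasse_eval_one Q i N hN]
    symm
    apply Finset.sum_subset (Finset.range_subset_range.2 (by omega))
    intro m hm hnm
    simp only [Finset.mem_range, not_lt] at hnm
    rw [Q.coeff_eq_zero_of_natDegree_lt (by omega)]
    simp
  set F : ℕ → ℝ := fun i => (-1 : ℝ) ^ (i - k) * (i.choose k) * (hasseDeriv i Q).eval 1 with hF
  have htr : ∑ j ∈ Finset.range (J + 1),
      (-1 : ℝ) ^ j * ((k + j).choose k) * (hasseDeriv (k + j) Q).eval 1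
      = ∑ i ∈ Finset.Ico k (k + J + 1), F i := by
    rw [Finset.sum_Ico_eq_sum_range, show k + J + 1 - k = J + 1 by omega]
    apply Finset.sum_congr rfl
    intro j _
    simp only [hF, show k + j - k = j by omega]
  have e0 : ∑ i ∈ Finset.Ico 0 k, F i = 0 := by
    apply Finset.sum_eq_zero
    intro i hi
    simp only [Finset.mem_Ico] at hi
    simp only [hF, Nat.choose_eq_zero_of_lt hi.2]
    simp
  have e1 := Finset.sum_Ico_consecutive F (Nat.zero_le k) (show k ≤ N by omega)
  have e2 := Finset.sum_Ico_consecutive F (show k ≤ k + J + 1 by omega)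
    (show k + J + 1 ≤ N by omega)
  have hfull : Q.coeff k = ∑ i ∈ Finset.Ico 0 N, F i := by
    rw [inversion Q k N hN, Finset.range_eq_Ico]
  have hdiff : Q.coeff k - ∑ i ∈ Finset.Ico k (k + J + 1), F i
      = ∑ i ∈ Finset.Ico (k + J + 1) N, F i := by
    rw [hfull, ← e1, e0, zero_add, ← e2]
    ring
  rw [htr, hdiff]
  -- swap sums
  set w : ℕ → ℝ := fun m =>
    ∑ i ∈ Finset.Ico (k + J + 1) N, (-1 : ℝ) ^ (i - k) * (i.choose k) * (m.choose i) with hw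
  have hswap : ∑ i ∈ Finset.Ico (k + J + 1) N, F i
      = ∑ m ∈ Finset.range N, Q.coeff m * w m := by
    simp only [hF, hh, Finset.mul_sum]
    rw [Finset.sum_comm]
    apply Finset.sum_congr rfl
    intro m _
    simp only [hw, Finset.mul_sum]
    apply Finset.sum_congr rfl
    intro i _
    ring
  rw [hswap]
  have hwb : ∀ m ∈ Finset.range N, |w m| ≤ ((k + J + 1).choose k : ℝ) * (m.choose (k + J + 1)) := by
    intro m hm
    simp only [Finset.mem_range] at hm
    rcases lt_or_ge m (k + J + 1) with hsm | hsm
    · have hz : w m = 0 := by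
        apply Finset.sum_eq_zero
        intro i hi
        simp only [Finset.mem_Ico] at hi
        rw [Nat.choose_eq_zero_of_lt (show m < i by omega)]
        simp
      rw [hz, abs_zero]
      positivity
    · have hkm : k < m := by omega
      have hsub := Finset.sum_Ico_eq_sub
        (fun i => (-1 : ℝ) ^ (i - k) * (i.choose k) * (m.choose i))
        (show k + J + 1 ≤ N by omega)
      have hA := Ssum m k (N - (k + 1)) hkm
      rw [show k + 1 + (N - (k + 1)) = N by omega] at hA
      have hB := Ssum m k J hkm
      rw [show k + 1 + J = k + J + 1 by omega] at hB
      have hzero : ((m - k - 1).choose (N - (k + 1)) : ℝ) = 0 := by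
        rw [Nat.choose_eq_zero_of_lt (by omega)]
        simp
      have hwm : w m = -((-1 : ℝ) ^ J * (m.choose k) * ((m - k - 1).choose J)) := by
        simp only [hw]
        rw [hsub, hA, hB, hzero]
        ring
      rw [hwm, abs_neg, abs_mul, abs_mul, abs_pow, abs_neg, abs_one, one_pow, one_mul,
        Nat.abs_cast, Nat.abs_cast]
      have hnat := Nat.choose_mul (n := m) (show k ≤ k + J + 1 by omega)
      rw [show k + J + 1 - k = J + 1 by omega] at hnat
      have p1 : ((m - k - 1).choose J : ℝ) ≤ ((m - k).choose (J + 1) : ℝ) := by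
        have h2 : (m - k).choose (J + 1) = (m - k - 1).choose J + (m - k - 1).choose (J + 1) := by
          conv_lhs => rw [show m - k = (m - k - 1) + 1 by omega]
          exact Nat.choose_succ_succ _ _
        have h3 : (m - k - 1).choose J ≤ (m - k).choose (J + 1) := by omega
        exact_mod_cast h3
      have p2 : (m.choose k : ℝ) * ((m - k).choose (J + 1))
          = ((k + J + 1).choose k) * (m.choose (k + J + 1)) := by
        exact_mod_cast congrArg (Nat.cast : ℕ → ℝ) (hnat.symm.trans (Nat.mul_comm _ _))
      calc (m.choose k : ℝ) * ((m - k - 1).choose J)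
          ≤ (m.choose k : ℝ) * ((m - k).choose (J + 1)) :=
            mul_le_mul_of_nonneg_left p1 (by positivity)
        _ = _ := p2
  calc |∑ m ∈ Finset.range N, Q.coeff m * w m|
      ≤ ∑ m ∈ Finset.range N, |Q.coeff m * w m| := Finset.abs_sum_le_sum_abs _ _
    _ ≤ ∑ m ∈ Finset.range N, Q.coeff m * (((k + J + 1).choose k : ℝ) * (m.choose (k + J + 1))) := by
        apply Finset.sum_le_sum
        intro m hm
        rw [abs_mul, abs_of_nonneg (hq m)]
        exact mul_le_mul_of_nonneg_left (hwb m hm) (hq m)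
    _ = ((k + J + 1).choose k : ℝ) * (hasseDeriv (k + J + 1) Q).eval 1 := by
        rw [hh (k + J + 1), Finset.mul_sum]
        apply Finset.sum_congr rfl
        intro m _
        ring

lemma hasse_X_sub_one_mul (R : Polynomial ℝ) (j : ℕ) :
    (hasseDeriv (j + 1) ((X - 1) * R)).eval 1 = (hasseDeriv j R).eval 1 := by
  rw [hasseDeriv_mul, Finset.Nat.sum_antidiagonal_eq_sum_range_succ_mk, eval_finset_sum]
  rw [Finset.sum_eq_single 1]
  · simp [hasseDeriv_one']
  · intro i hi hne
    rcases Nat.eq_zero_or_pos i with h0 | hpos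
    · subst h0; simp [hasseDeriv_zero']
    · have h2 : 2 ≤ i := by omega
      have hx : 1 < i := by omega
      have hz : hasseDeriv i (X - 1 : Polynomial ℝ) = 0 := by
        rw [map_sub, hasseDeriv_X _ hx, hasseDeriv_apply_one _ (by omega : 0 < i)]
        simp
      simp [hz]
  · intro h; simp at h

lemma rec_eval (Q : Polynomial ℝ) (a b : ℝ) (j : ℕ) :
    (hasseDeriv j (C a * Q + C b * (X - 1) * derivative Q)).eval 1
      = (a + j * b) * (hasseDeriv j Q).eval 1 := by
  rw [map_add, eval_add]
  have h1 : (hasseDeriv j (C a * Q)).eval 1 = a * (hasseDeriv j Q).eval 1 := by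
    rw [← smul_eq_C_mul, map_smul]; simp
  have h2 : (hasseDeriv j (C b * (X - 1) * derivative Q)).eval 1
      = (j : ℝ) * b * (hasseDeriv j Q).eval 1 := by
    rw [mul_assoc, ← smul_eq_C_mul, map_smul]
    cases j with
    | zero => simp [hasseDeriv_zero']
    | succ i =>
      rw [eval_smul, smul_eq_mul, hasse_X_sub_one_mul]
      have hcomp : hasseDeriv i (derivative Q) = ((i + 1).choose i) • hasseDeriv (i + 1) Q := by
        rw [← hasseDeriv_one']
        exact LinearMap.congr_fun (hasseDeriv_comp i 1) Q
      rw [hcomp, Nat.choose_succ_self_right]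
      simp only [eval_smul, smul_eq_mul, nsmul_eq_mul, eval_add, eval_mul, eval_natCast]
      push_cast
      ring
  rw [h1, h2]
  ring

end AuxPoisson

/-- Proposition `prop:pol_recur`: Under the recurrence
`P_n' = f_n · P_{n-1} + g_n · (x-1) · P_{n-1}'`, with nonnegative coefficients,
`P_n(1) > 0`, `f_n ≠ 0`, `g_n/f_n → 0`, and `f_n · P_{n-1}(1)/P_n(1) → c > 0`,
the random variables `X_n` with `P(X_n = k) = [x^k]P_n(x)/P_n(1)` converge in
distribution to `Pois(c)`: for every `k`, `[x^k]P_n(x)/P_n(1) → e^{-c}·c^k/k!`. -/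
theorem stmt_3 (f g : ℕ → ℝ) (P : ℕ → Polynomial ℝ) (c : ℝ)
    (hrec : ∀ n : ℕ, 1 ≤ n →
      derivative (P n) =
        C (f n) * P (n - 1) + C (g n) * (X - 1) * derivative (P (n - 1)))
    (hnonneg : ∀ n k, 0 ≤ (P n).coeff k)
    (hP1 : ∀ n, 0 < (P n).eval 1)
    (hf : ∀ n, f n ≠ 0)
    (hgf : Tendsto (fun n => g n / f n) atTop (nhds 0))
    (hc : c > 0)
    (hfP : Tendsto (fun n => f n * (P (n - 1)).eval 1 / (P n).eval 1) atTop (nhds c)) :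
    ∀ k : ℕ,
      Tendsto (fun n => (P n).coeff k / (P n).eval 1) atTop
        (nhds (Real.exp (-c) * c ^ k / (Nat.factorial k))) := by
  -- normalized Hasse-derivative moments
  set μ : ℕ → ℕ → ℝ := fun n j => (hasseDeriv j (P n)).eval 1 / (P n).eval 1 with hμ
  have hs : ∀ n, (P n).eval 1 ≠ 0 := fun n => (hP1 n).ne'
  have hHnn : ∀ n j, 0 ≤ (hasseDeriv j (P n)).eval 1 := by
    intro n j
    rw [hasse_eval_one (P n) j ((P n).natDegree + 1) (Nat.lt_succ_self _)]
    exact Finset.sum_nonneg fun m _ => mul_nonneg (by positivity) (hnonneg n m)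
  have hμnn : ∀ n j, 0 ≤ μ n j := fun n j => div_nonneg (hHnn n j) (hP1 n).le
  -- the recurrence for hasse evaluations
  have hrecval : ∀ n, 1 ≤ n → ∀ j : ℕ, ((j : ℝ) + 1) * (hasseDeriv (j + 1) (P n)).eval 1
      = (f n + j * g n) * (hasseDeriv j (P (n - 1))).eval 1 := by
    intro n hn j
    have h1 : (hasseDeriv j (derivative (P n))).eval 1
        = (f n + j * g n) * (hasseDeriv j (P (n - 1))).eval 1 := by
      rw [hrec n hn]; exact rec_eval _ _ _ _
    have h2 : hasseDeriv j (derivative (P n)) = ((j + 1).choose j) • hasseDeriv (j + 1) (P n) := by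
      rw [← hasseDeriv_one']
      exact LinearMap.congr_fun (hasseDeriv_comp j 1) (P n)
    rw [h2, Nat.choose_succ_self_right] at h1
    rw [← h1]
    simp only [eval_smul, nsmul_eq_mul, smul_eq_mul, eval_add, eval_mul, eval_natCast]
    push_cast
    ring
  -- convergence of moments
  have hmom : ∀ j, Tendsto (fun n => μ n j) atTop (nhds (c ^ j / j.factorial)) := by
    intro j
    induction j with
    | zero =>
      have heq : (fun n => μ n 0) = fun _ => (1 : ℝ) :=
        funext fun n => by simp only [hμ, hasseDeriv_zero', div_self (hs n)]
      have hv : c ^ 0 / ((Nat.factorial 0 : ℕ) : ℝ) = 1 := by norm_num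
      rw [heq, hv]
      exact tendsto_const_nhds
    | succ j ih =>
      have hB : Tendsto (fun n => (g n / f n) * (f n * (P (n - 1)).eval 1 / (P n).eval 1))
          atTop (nhds (0 * c)) := hgf.mul hfP
      have hprev : Tendsto (fun n => μ (n - 1) j) atTop (nhds (c ^ j / j.factorial)) :=
        ih.comp (tendsto_sub_atTop_nat 1)
      have T2 : Tendsto (fun n =>
          ((f n * (P (n - 1)).eval 1 / (P n).eval 1)
            + j * ((g n / f n) * (f n * (P (n - 1)).eval 1 / (P n).eval 1))) * μ (n - 1) j
            / ((j : ℝ) + 1))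
          atTop (nhds ((c + j * (0 * c)) * (c ^ j / j.factorial) / ((j : ℝ) + 1))) :=
        ((hfP.add (hB.const_mul (j : ℝ))).mul hprev).div_const _
      have hval : (c + (j : ℝ) * (0 * c)) * (c ^ j / j.factorial) / ((j : ℝ) + 1)
          = c ^ (j + 1) / (j + 1).factorial := by
        rw [Nat.factorial_succ]
        push_cast
        field_simp
        ring
      rw [hval] at T2
      apply T2.congr'
      filter_upwards [eventually_ge_atTop 1] with n hn
      have hrv := hrecval n hn j
      have hj1 : ((j : ℝ) + 1) ≠ 0 := by positivity
      have hH : (hasseDeriv (j + 1) (P n)).eval 1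
          = (f n + j * g n) * (hasseDeriv j (P (n - 1))).eval 1 / ((j : ℝ) + 1) := by
        rw [eq_div_iff hj1]; linarith [hrv]
      have gen : ∀ a b e0 e1 h : ℝ, a ≠ 0 → e0 ≠ 0 → e1 ≠ 0 →
          (a * e1 / e0 + (j : ℝ) * ((b / a) * (a * e1 / e0))) * (h / e1) / ((j : ℝ) + 1)
            = ((a + (j : ℝ) * b) * h / ((j : ℝ) + 1)) / e0 := by
        intros a b e0 e1 h ha h0 h1
        field_simp
      simp only [hμ]
      rw [hH]
      exact gen (f n) (g n) _ _ _ (hf n) (hs n) (hs (n - 1))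
  -- final epsilon argument
  intro k
  rw [Metric.tendsto_atTop]
  intro ε hε
  have hterm : ∀ j : ℕ, (((k + j).choose k : ℕ) : ℝ) * (c ^ (k + j) / ((k + j).factorial))
      = (c ^ k / k.factorial) * (c ^ j / j.factorial) := by
    intro j
    have hnat : (k + j).choose k * k.factorial * j.factorial = (k + j).factorial := by
      rw [Nat.choose_symm_add]
      exact Nat.add_choose_mul_factorial_mul_factorial k j
    have h1 : (((k + j).factorial : ℕ) : ℝ)
        = ((k + j).choose k) * k.factorial * j.factorial := by exact_mod_cast hnat.symm
    rw [div_mul_div_comm, ← pow_add, h1]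
    have c1 : (((k + j).choose k : ℕ) : ℝ) ≠ 0 := by
      have := Nat.choose_pos (show k ≤ k + j by omega)
      positivity
    have c2 : ((k.factorial : ℕ) : ℝ) ≠ 0 := by positivity
    have c3 : ((j.factorial : ℕ) : ℝ) ≠ 0 := by positivity
    field_simp
  have hexp : HasSum (fun n : ℕ => (-c) ^ n / (n.factorial : ℝ)) (Real.exp (-c)) := by
    have hexpeq : Real.exp (-c) = ∑' n : ℕ, (-c) ^ n / (n.factorial : ℝ) := by
      rw [Real.exp_eq_exp_ℝ, NormedSpace.exp_eq_tsum_div]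
    rw [hexpeq]
    exact (Real.summable_pow_div_factorial (-c)).hasSum
  have hTinf : Tendsto (fun J : ℕ => ∑ j ∈ Finset.range (J + 1),
      (-1 : ℝ) ^ j * ((k + j).choose k) * (c ^ (k + j) / ((k + j).factorial)))
      atTop (nhds (Real.exp (-c) * c ^ k / (Nat.factorial k))) := by
    have hps : Tendsto (fun J : ℕ => ∑ j ∈ Finset.range (J + 1), (-c) ^ j / (j.factorial : ℝ))
        atTop (nhds (Real.exp (-c))) := hexp.tendsto_sum_nat.comp (tendsto_add_atTop_nat 1)
    have h2 := hps.const_mul (c ^ k / (k.factorial : ℝ))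
    have hval : (c ^ k / (k.factorial : ℝ)) * Real.exp (-c)
        = Real.exp (-c) * c ^ k / (Nat.factorial k) := by ring
    rw [hval] at h2
    apply h2.congr
    intro J
    rw [Finset.mul_sum]
    apply Finset.sum_congr rfl
    intro j _
    rw [mul_assoc ((-1 : ℝ) ^ j), hterm j, neg_pow]
    ring
  have herr : Tendsto (fun J : ℕ =>
      (((k + J + 1).choose k : ℕ) : ℝ) * (c ^ (k + J + 1) / ((k + J + 1).factorial)))
      atTop (nhds 0) := by
    have h0 : Tendsto (fun m : ℕ => c ^ m / (m.factorial : ℝ)) atTop (nhds 0) :=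
      (Real.summable_pow_div_factorial c).tendsto_atTop_zero
    have h1 : Tendsto (fun J : ℕ => c ^ (J + 1) / ((J + 1).factorial : ℝ)) atTop (nhds 0) :=
      h0.comp (tendsto_add_atTop_nat 1)
    have h2 := h1.const_mul (c ^ k / (k.factorial : ℝ))
    rw [mul_zero] at h2
    apply h2.congr
    intro J
    have ht := hterm (J + 1)
    rw [show k + (J + 1) = k + J + 1 by omega] at ht
    exact ht.symm
  obtain ⟨J₁, hJ₁⟩ := (Metric.tendsto_atTop.mp hTinf) (ε / 3) (by linarith)
  obtain ⟨J₂, hJ₂⟩ := (Metric.tendsto_atTop.mp herr) (ε / 6) (by linarith)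
  set J := max J₁ J₂ with hJdef
  have hJa := hJ₁ J (le_max_left _ _)
  have hJb := hJ₂ J (le_max_right _ _)
  set TJ := ∑ j ∈ Finset.range (J + 1),
    (-1 : ℝ) ^ j * ((k + j).choose k) * (c ^ (k + j) / ((k + j).factorial)) with hTJ
  set CB := (((k + J + 1).choose k : ℕ) : ℝ) with hCB
  have hTn : Tendsto (fun n => ∑ j ∈ Finset.range (J + 1),
      (-1 : ℝ) ^ j * ((k + j).choose k) * μ n (k + j)) atTop (nhds TJ) := by
    rw [hTJ]
    apply tendsto_finset_sum
    intro j _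
    exact (hmom (k + j)).const_mul _
  have hμlim : Tendsto (fun n => CB * μ n (k + J + 1)) atTop
      (nhds (CB * (c ^ (k + J + 1) / ((k + J + 1).factorial)))) :=
    (hmom (k + J + 1)).const_mul _
  obtain ⟨N₁, hN₁⟩ := (Metric.tendsto_atTop.mp hTn) (ε / 3) (by linarith)
  obtain ⟨N₂, hN₂⟩ := (Metric.tendsto_atTop.mp hμlim) (ε / 6) (by linarith)
  refine ⟨max N₁ N₂, fun n hn => ?_⟩
  have h1 := hN₁ n (le_trans (le_max_left _ _) hn)
  have h2 := hN₂ n (le_trans (le_max_right _ _) hn)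
  have hEB := error_bound (P n) (hnonneg n) k J
  have hdivEB : |(P n).coeff k / (P n).eval 1
      - ∑ j ∈ Finset.range (J + 1), (-1 : ℝ) ^ j * ((k + j).choose k) * μ n (k + j)|
      ≤ CB * μ n (k + J + 1) := by
    have key : (P n).coeff k / (P n).eval 1
        - ∑ j ∈ Finset.range (J + 1), (-1 : ℝ) ^ j * ((k + j).choose k) * μ n (k + j)
        = ((P n).coeff k - ∑ j ∈ Finset.range (J + 1),
            (-1 : ℝ) ^ j * ((k + j).choose k) * (hasseDeriv (k + j) (P n)).eval 1)
          / (P n).eval 1 := by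
      rw [sub_div, Finset.sum_div]
      congr 1
      apply Finset.sum_congr rfl
      intro j _
      simp only [hμ]
      ring
    rw [key, abs_div, abs_of_pos (hP1 n)]
    have step : |(P n).coeff k - ∑ j ∈ Finset.range (J + 1),
        (-1 : ℝ) ^ j * ((k + j).choose k) * (hasseDeriv (k + j) (P n)).eval 1| / (P n).eval 1
        ≤ (CB * (hasseDeriv (k + J + 1) (P n)).eval 1) / (P n).eval 1 := by
      gcongr
      all_goals first | exact hEB | exact (hP1 n).le | exact hP1 n
    apply step.trans_eq
    simp only [hμ]
    ring
  rw [Real.dist_eq]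
  have d1 : |(∑ j ∈ Finset.range (J + 1), (-1 : ℝ) ^ j * ((k + j).choose k) * μ n (k + j)) - TJ|
      < ε / 3 := by rw [← Real.dist_eq]; exact h1
  have d0 : |TJ - Real.exp (-c) * c ^ k / (Nat.factorial k)| < ε / 3 := by
    rw [← Real.dist_eq]; exact hJa
  have d2 : CB * μ n (k + J + 1) < ε / 3 := by
    have e1 : |CB * μ n (k + J + 1) - CB * (c ^ (k + J + 1) / ((k + J + 1).factorial))| < ε / 6 := by
      rw [← Real.dist_eq]; exact h2
    have e2 : |CB * (c ^ (k + J + 1) / ((k + J + 1).factorial))| < ε / 6 := by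
      have := hJb
      rw [Real.dist_eq, sub_zero] at this
      exact this
    have e3 : CB * μ n (k + J + 1) ≤ |CB * μ n (k + J + 1)| := le_abs_self _
    calc CB * μ n (k + J + 1) ≤ |CB * μ n (k + J + 1)| := e3
      _ ≤ |CB * μ n (k + J + 1) - CB * (c ^ (k + J + 1) / ((k + J + 1).factorial))|
          + |CB * (c ^ (k + J + 1) / ((k + J + 1).factorial))| := by
            have h4 := abs_sub_abs_le_abs_sub (CB * μ n (k + J + 1))
              (CB * (c ^ (k + J + 1) / ((k + J + 1).factorial)))
            linarith
      _ < ε / 6 + ε / 6 := by exact add_lt_add e1 e2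
      _ = ε / 3 := by ring
  calc |(P n).coeff k / (P n).eval 1 - Real.exp (-c) * c ^ k / (Nat.factorial k)|
      ≤ |(P n).coeff k / (P n).eval 1
          - ∑ j ∈ Finset.range (J + 1), (-1 : ℝ) ^ j * ((k + j).choose k) * μ n (k + j)|
        + |(∑ j ∈ Finset.range (J + 1), (-1 : ℝ) ^ j * ((k + j).choose k) * μ n (k + j))
          - Real.exp (-c) * c ^ k / (Nat.factorial k)| := abs_sub_le _ _ _
    _ ≤ |(P n).coeff k / (P n).eval 1
          - ∑ j ∈ Finset.range (J + 1), (-1 : ℝ) ^ j * ((k + j).choose k) * μ n (k + j)|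
        + (|(∑ j ∈ Finset.range (J + 1), (-1 : ℝ) ^ j * ((k + j).choose k) * μ n (k + j)) - TJ|
          + |TJ - Real.exp (-c) * c ^ k / (Nat.factorial k)|) := by
            have := abs_sub_le (∑ j ∈ Finset.range (J + 1),
              (-1 : ℝ) ^ j * ((k + j).choose k) * μ n (k + j)) TJ
              (Real.exp (-c) * c ^ k / (Nat.factorial k))
            linarith
    _ < ε / 3 + (ε / 3 + ε / 3) := by
        have := hdivEB.trans_lt d2
        linarith
    _ = ε := by ring
end

section
/- Let (P_n) be a sequence of real polynomials satisfying P_0(x) = 1 and P_n'(x) = n·P_{n-1}(x) + 2(1-x)·P_{n-1}'(x) for n ≥ 1, and let (Q_n) be a sequence of real polynomials satisfying Q_0(x) = 1 and Q_n'(x) = 2n·x·Q_{n-1}(x) + 2(1-x²)·Q_{n-1}'(x) for n ≥ 1, normalized so that Q_n(1) = P_n(1) for all n ≥ 0. Then Q_n(x) = P_n(x²) for all n ≥ 0. -/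
open Polynomial

lemma eq_of_deriv_eq (p q : Polynomial ℝ) (hd : derivative p = derivative q)
    (he : p.eval 1 = q.eval 1) : p = q := by
  have h : derivative (p - q) = 0 := by
    rw [derivative_sub, hd, sub_self]
  have h0 : (p - q).natDegree = 0 := natDegree_eq_zero_of_derivative_eq_zero h
  obtain ⟨c, hc⟩ := natDegree_eq_zero.mp h0
  have : c = 0 := by
    have := congrArg (eval 1) hc.symm
    simpa [he] using this.symm
  have : p - q = 0 := by rw [← hc, this, map_zero]
  exact sub_eq_zero.mp this

/-- If `P_0 = 1`, `P_n' = n·P_{n-1} + 2(1-x)·P_{n-1}'`, and `Q_0 = 1`,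
`Q_n' = 2n·x·Q_{n-1} + 2(1-x²)·Q_{n-1}'`, normalized so that `Q_n(1) = P_n(1)`,
then `Q_n(x) = P_n(x²)` for all `n ≥ 0`. -/
theorem stmt_4 (P Q : ℕ → Polynomial ℝ)
    (hP0 : P 0 = 1)
    (hPrec : ∀ n : ℕ, 1 ≤ n →
      derivative (P n) = C (n : ℝ) * P (n - 1) + C 2 * (1 - X) * derivative (P (n - 1)))
    (hQ0 : Q 0 = 1)
    (hQrec : ∀ n : ℕ, 1 ≤ n →
      derivative (Q n) =
        C (2 * (n : ℝ)) * X * Q (n - 1) + C 2 * (1 - X ^ 2) * derivative (Q (n - 1)))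
    (hnorm : ∀ n : ℕ, (Q n).eval 1 = (P n).eval 1) :
    ∀ n : ℕ, Q n = (P n).comp (X ^ 2) := by
  intro n
  induction n with
  | zero => simp [hP0, hQ0]
  | succ n ih =>
    apply eq_of_deriv_eq
    · rw [hQrec (n + 1) (by omega), derivative_comp]
      simp only [Nat.add_sub_cancel] at *
      rw [ih, hPrec (n + 1) (by omega)]
      simp only [Nat.add_sub_cancel]
      rw [derivative_comp]
      simp only [add_comp, mul_comp, sub_comp, neg_comp, X_comp, C_comp, one_comp,
        derivative_X_pow]
      push_cast
      rw [show ((2:ℝ) * ((n:ℝ) + 1)) = 2 * (n + 1) by ring, C_mul]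
      ring
    · simp [hnorm, eval_comp]
end

section
/- Let (P_n) be a sequence of real polynomials with nonnegative coefficients satisfying P_0(x) = 1, P_n'(x) = n·P_{n-1}(x) + 2(1-x)·P_{n-1}'(x) for n ≥ 1, and P_n(1) = n! for all n ≥ 0. Then for every integer k ≥ 0, the normalized coefficient [x^k]P_n(x)/n! converges to e^{-1}/k! as n → ∞; that is, the number of occupied corners in a random tree-like tableau of size n converges in distribution to a Poisson random variable with parameter 1. -/
open Polynomial Filter

noncomputable def dd (n j : ℕ) : ℝ :=
  (-1 : ℝ)^j * ((n + 1 - j).descFactorial j : ℝ) * ((n - j).factorial : ℝ) / (j.factorial : ℝ)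

noncomputable def EE (n : ℕ) : Polynomial ℝ :=
  ∑ j ∈ Finset.range (n + 1), C (dd n j) * (1 - X)^j

lemma dd_rec (m j : ℕ) :
    -(((j:ℝ))+1) * dd (m+1) (j+1) = (((m:ℝ) + 1) - 2*j) * dd m j := by
  have hD : (((m + 1 - j).descFactorial j : ℕ) : ℝ) * (((m:ℝ)+1) - 2*j)
      = (((m + 1 - j).descFactorial j : ℕ) : ℝ) * ((m + 1 - 2*j : ℕ) : ℝ) := by
    rcases le_or_gt (2*j) (m+1) with h | h
    · congr 1
      rw [Nat.cast_sub h]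
      push_cast
      ring
    · have h0 : (m + 1 - j).descFactorial j = 0 := by
        rw [Nat.descFactorial_eq_zero_iff_lt]; omega
      simp [h0]
  unfold dd
  have h1 : m + 1 + 1 - (j+1) = m + 1 - j := by omega
  have h2 : m + 1 - (j+1) = m - j := by omega
  have h3 : m + 1 - j - j = m + 1 - 2*j := by omega
  rw [h1, h2, Nat.descFactorial_succ, h3, Nat.factorial_succ]
  have hj : ((j.factorial : ℝ)) ≠ 0 := by positivity
  have hj1 : ((j:ℝ) + 1) ≠ 0 := by positivity
  push_cast
  field_simp
  linear_combination (-(-1:ℝ)^j) * hD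


lemma deriv_pow_one_sub_X (j : ℕ) :
    derivative ((1 - X : ℝ[X])^j) = C (j:ℝ) * (1 - X)^(j-1) * (-1) := by
  rw [derivative_pow]
  simp

lemma EE_rec (m : ℕ) :
    derivative (EE (m+1)) = C ((m:ℝ)+1) * EE m + C 2 * (1 - X) * derivative (EE m) := by
  have L : derivative (EE (m+1)) =
      ∑ j ∈ Finset.range (m+1), C (-(((j:ℝ))+1) * dd (m+1) (j+1)) * (1-X)^j := by
    unfold EE
    rw [map_sum, Finset.sum_range_succ']
    have h0 : derivative (C (dd (m+1) 0) * (1-X)^0) = 0 := by simp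
    rw [h0, add_zero]
    refine Finset.sum_congr rfl fun j _ => ?_
    rw [derivative_C_mul, deriv_pow_one_sub_X]
    push_cast
    simp only [C_mul, C_neg, C_add, C_1]
    ring
  have R : C ((m:ℝ)+1) * EE m + C 2 * (1 - X) * derivative (EE m) =
      ∑ j ∈ Finset.range (m+1), C ((((m:ℝ)+1) - 2*j) * dd m j) * (1-X)^j := by
    unfold EE
    rw [map_sum, Finset.mul_sum, Finset.mul_sum, ← Finset.sum_add_distrib]
    refine Finset.sum_congr rfl fun j _ => ?_
    rw [derivative_C_mul, deriv_pow_one_sub_X]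
    cases j with
    | zero =>
      simp only [Nat.cast_zero, map_zero, zero_mul, mul_zero, pow_zero, mul_one, Nat.zero_sub]
      simp only [C_mul, C_sub, C_add, C_1, Nat.cast_zero]
      ring_nf
      simp
    | succ i =>
      simp only [Nat.add_sub_cancel]
      rw [pow_succ]
      push_cast
      simp only [C_mul, C_sub, C_add, C_1, map_ofNat]
      ring
  rw [L, R]
  exact Finset.sum_congr rfl fun j _ => by rw [dd_rec]

lemma EE_zero : EE 0 = 1 := by
  have : dd 0 0 = 1 := by simp [dd]
  simp [EE, this]

lemma EE_eval_one (n : ℕ) : (EE n).eval 1 = (n.factorial : ℝ) := by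
  unfold EE
  rw [eval_finset_sum]
  rw [Finset.sum_eq_single 0]
  · simp [dd]
  · intro j _ hj
    simp [sub_self, zero_pow hj]
  · intro h
    simp at h

lemma coeff_one_sub_X_pow (j k : ℕ) :
    ((1 - X : ℝ[X])^j).coeff k = (-1:ℝ)^k * (j.choose k) := by
  have h2 : (1 - X : ℝ[X])^j = C ((-1:ℝ)^j) * (X + C (-1))^j := by
    rw [C_pow, ← mul_pow]
    congr 1
    simp only [C_neg, C_1]
    ring
  rw [h2, coeff_C_mul, coeff_X_add_C_pow]
  rcases le_or_gt k j with h | h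
  · have e1 : (-1:ℝ)^j = (-1)^(j-k) * (-1)^k := by
      rw [← pow_add]; congr 1; omega
    have e2 : (-1:ℝ)^(j-k) * (-1:ℝ)^(j-k) = 1 := by
      rw [← pow_add]; exact Even.neg_one_pow ⟨j - k, by ring⟩
    calc (-1:ℝ)^j * ((-1)^(j-k) * (j.choose k)) 
        = ((-1:ℝ)^(j-k) * (-1:ℝ)^(j-k)) * ((-1)^k * (j.choose k)) := by rw [e1]; ring
      _ = (-1:ℝ)^k * (j.choose k) := by rw [e2]; ring
  · simp [Nat.choose_eq_zero_of_lt h]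

lemma EE_coeff (n k : ℕ) :
    (EE n).coeff k = ∑ j ∈ Finset.range (n+1), dd n j * ((-1:ℝ)^k * (j.choose k)) := by
  unfold EE
  rw [finset_sum_coeff]
  refine Finset.sum_congr rfl fun j _ => ?_
  rw [coeff_C_mul, coeff_one_sub_X_pow]

lemma tendsto_sub_div (a b : ℕ) :
    Tendsto (fun n : ℕ => ((n - a : ℕ):ℝ)/((n - b : ℕ):ℝ)) atTop (nhds 1) := by
  have h2 : Tendsto (fun n : ℕ => ((n:ℝ) - b)) atTop atTop := by
    simpa [sub_eq_add_neg] using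
      tendsto_atTop_add_const_right atTop (-(b:ℝ)) tendsto_natCast_atTop_atTop
  have h3 : Tendsto (fun n : ℕ => 1 + ((b:ℝ) - a) * ((n:ℝ) - b)⁻¹) atTop (nhds (1 + ((b:ℝ)-a) * 0)) :=
    tendsto_const_nhds.add (h2.inv_tendsto_atTop.const_mul _)
  rw [show (1:ℝ) + ((b:ℝ)-a)*0 = 1 by ring] at h3
  apply h3.congr'
  filter_upwards [eventually_ge_atTop (a + b + 1)] with n hn
  have ha : a ≤ n := by omega
  have hb : b ≤ n := by omega
  have hne : (n:ℝ) - b ≠ 0 := by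
    have : (b:ℝ) < n := by exact_mod_cast Nat.lt_of_lt_of_le (by omega) le_rfl
    linarith
  rw [Nat.cast_sub ha, Nat.cast_sub hb]
  field_simp
  ring

lemma tendsto_descF (c j : ℕ) :
    Tendsto (fun n : ℕ => (((n - c).descFactorial j : ℕ):ℝ) / ((n.descFactorial j : ℕ):ℝ))
      atTop (nhds 1) := by
  induction j with
  | zero => simpa using tendsto_const_nhds
  | succ i ih =>
    have key : ∀ n : ℕ, (((n - c).descFactorial (i+1) : ℕ):ℝ) / ((n.descFactorial (i+1) : ℕ):ℝ)
        = (((n - (c+i) : ℕ):ℝ)/((n - i : ℕ):ℝ)) *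
          ((((n - c).descFactorial i : ℕ):ℝ) / ((n.descFactorial i : ℕ):ℝ)) := by
      intro n
      rw [Nat.descFactorial_succ, Nat.descFactorial_succ, Nat.sub_sub]
      push_cast
      rw [div_mul_div_comm]
    have := (tendsto_sub_div (c+i) i).mul ih
    rw [one_mul] at this
    exact this.congr fun n => (key n).symm

lemma Rlim (j : ℕ) :
    Tendsto (fun n : ℕ => (((n + 1 - j).descFactorial j : ℕ):ℝ) * ((n - j).factorial : ℝ)
      / (n.factorial : ℝ)) atTop (nhds 1) := by
  cases j with
  | zero =>
    have : ∀ n : ℕ, (((n + 1 - 0).descFactorial 0 : ℕ):ℝ) * ((n - 0).factorial : ℝ)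
        / (n.factorial : ℝ) = 1 := by
      intro n
      simp [Nat.descFactorial]
      exact_mod_cast Nat.factorial_ne_zero n
    simp only [this]
    exact tendsto_const_nhds
  | succ i =>
    refine Tendsto.congr' ?_ (tendsto_descF i (i+1))
    filter_upwards [eventually_ge_atTop (i+1)] with n hn
    have h1 : n + 1 - (i+1) = n - i := by omega
    have h2 : (n - (i+1)).factorial * n.descFactorial (i+1) = n.factorial :=
      Nat.factorial_mul_descFactorial hn
    have hF : ((n - (i+1)).factorial : ℝ) ≠ 0 := by exact_mod_cast Nat.factorial_ne_zero _
    rw [h1, ← h2]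
    push_cast
    rw [mul_comm ((n - (i+1)).factorial : ℝ) (n.descFactorial (i+1) : ℝ),
      mul_div_mul_right _ _ hF]

lemma bound_nat (n j : ℕ) :
    (n + 1 - j).descFactorial j * (n - j).factorial ≤ n.factorial := by
  rcases Nat.eq_zero_or_pos j with rfl | hj
  · simp
  rcases le_or_gt j n with h | h
  · calc (n + 1 - j).descFactorial j * (n - j).factorial
        ≤ n.descFactorial j * (n - j).factorial :=
          Nat.mul_le_mul_right _ (Nat.descFactorial_le _ (by omega))
      _ = n.factorial := by rw [← Nat.factorial_mul_descFactorial h]; ring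
  · have h0 : (n + 1 - j).descFactorial j = 0 := by
      rw [Nat.descFactorial_eq_zero_iff_lt]; omega
    simp [h0]

lemma dd_zero {n j : ℕ} (h : n < j) : dd n j = 0 := by
  have h0 : (n + 1 - j).descFactorial j = 0 := by
    rw [Nat.descFactorial_eq_zero_iff_lt]; omega
  simp [dd, h0]

lemma summable_bound (k : ℕ) : Summable (fun j : ℕ => (j.choose k : ℝ)/(j.factorial : ℝ)) := by
  rw [← summable_nat_add_iff k]
  have key : ∀ m : ℕ, (((m+k).choose k : ℝ))/((m+k).factorial : ℝ)
      = ((1:ℝ)/(k.factorial : ℝ)) * ((1:ℝ)^m/(m.factorial : ℝ)) := by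
    intro m
    have h : (m+k).choose k * k.factorial * m.factorial = (m+k).factorial := by
      have := Nat.choose_mul_factorial_mul_factorial (Nat.le_add_left k m)
      simpa using this
    have hk : ((k.factorial : ℝ)) ≠ 0 := by exact_mod_cast Nat.factorial_ne_zero _
    have hm : ((m.factorial : ℝ)) ≠ 0 := by exact_mod_cast Nat.factorial_ne_zero _
    have hmk : (((m+k).factorial : ℝ)) ≠ 0 := by exact_mod_cast Nat.factorial_ne_zero _
    have hr : ((m+k).choose k : ℝ) * (k.factorial : ℝ) * (m.factorial : ℝ)
        = ((m+k).factorial : ℝ) := by exact_mod_cast h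
    rw [one_pow]
    field_simp
    linear_combination hr
  simp only [key]
  exact (Real.summable_pow_div_factorial 1).mul_left _

lemma g_summable (k : ℕ) :
    Summable (fun j : ℕ => (-1:ℝ)^k * (j.choose k) * ((-1:ℝ)^j / (j.factorial:ℝ))) := by
  refine Summable.of_norm_bounded (summable_bound k) fun j => ?_
  simp only [Real.norm_eq_abs, abs_mul, abs_div, abs_pow, abs_neg, abs_one, one_pow, one_mul,
    Nat.abs_cast]
  apply le_of_eq
  ring

lemma g_tsum (k : ℕ) :
    ∑' j : ℕ, ((-1:ℝ)^k * (j.choose k) * ((-1:ℝ)^j / (j.factorial:ℝ)))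
      = Real.exp (-1) / (k.factorial : ℝ) := by
  rw [← Summable.sum_add_tsum_nat_add k (g_summable k)]
  have h1 : ∑ i ∈ Finset.range k, ((-1:ℝ)^k * (i.choose k) * ((-1:ℝ)^i / (i.factorial:ℝ))) = 0 := by
    apply Finset.sum_eq_zero
    intro i hi
    rw [Nat.choose_eq_zero_of_lt (Finset.mem_range.mp hi)]
    simp
  have h2 : ∀ m : ℕ, ((-1:ℝ)^k * (((m+k).choose k : ℕ):ℝ) * ((-1:ℝ)^(m+k) / (((m+k).factorial : ℕ):ℝ)))
      = ((-1:ℝ)^m / (m.factorial:ℝ)) / (k.factorial:ℝ) := by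
    intro m
    have h := Nat.choose_mul_factorial_mul_factorial (Nat.le_add_left k m)
    rw [Nat.add_sub_cancel] at h
    have hr : (((m+k).choose k : ℕ) : ℝ) * (k.factorial:ℝ) * (m.factorial:ℝ)
        = (((m+k).factorial : ℕ):ℝ) := by exact_mod_cast h
    have hneg : (-1:ℝ)^k * (-1:ℝ)^(m+k) = (-1:ℝ)^m := by
      rw [← pow_add, show k + (m+k) = m + 2*k by omega, pow_add, pow_mul]
      norm_num
    have hk : ((k.factorial : ℕ):ℝ) ≠ 0 := by exact_mod_cast Nat.factorial_ne_zero _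
    have hm : ((m.factorial : ℕ):ℝ) ≠ 0 := by exact_mod_cast Nat.factorial_ne_zero _
    have hmk : (((m+k).factorial : ℕ):ℝ) ≠ 0 := by exact_mod_cast Nat.factorial_ne_zero _
    field_simp
    linear_combination ((-1:ℝ)^k * (-1:ℝ)^(m+k)) * hr +
      ((((m+k).factorial : ℕ):ℝ)) * hneg
  rw [h1, zero_add, tsum_congr h2, tsum_div_const,
    Real.exp_eq_exp_ℝ, NormedSpace.exp_eq_tsum_div]

/-- Corollary: occupied corners of tree-like tableaux are asymptotically
`Pois(1)`: If `P_0 = 1`, `P_n' = n·P_{n-1} + 2(1-x)·P_{n-1}'`, the coefficients are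
nonnegative, and `P_n(1) = n!`, then for every `k`, `[x^k]P_n(x)/n! → e^{-1}/k!`. -/
theorem stmt_8 (P : ℕ → Polynomial ℝ)
    (hP0 : P 0 = 1)
    (hrec : ∀ n : ℕ, 1 ≤ n →
      derivative (P n) = C (n : ℝ) * P (n - 1) + C 2 * (1 - X) * derivative (P (n - 1)))
    (hnonneg : ∀ n k, 0 ≤ (P n).coeff k)
    (hnorm : ∀ n : ℕ, (P n).eval 1 = (n.factorial : ℝ)) :
    ∀ k : ℕ,
      Tendsto (fun n => (P n).coeff k / (n.factorial : ℝ)) atTop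
        (nhds (Real.exp (-1) / (k.factorial : ℝ))) := by
  have hPE : ∀ n, P n = EE n := by
    intro n
    induction n with
    | zero => rw [hP0, EE_zero]
    | succ m ih =>
      have h1 : derivative (P (m+1)) = derivative (EE (m+1)) := by
        have hr := hrec (m+1) (by omega)
        simp only [Nat.add_sub_cancel] at hr
        rw [hr, ih, EE_rec]
        push_cast
        ring
      have h2 : derivative (P (m+1) - EE (m+1)) = 0 := by
        rw [derivative_sub, h1, sub_self]
      obtain ⟨c, hc⟩ := Polynomial.natDegree_eq_zero.mp
        (Polynomial.natDegree_eq_zero_of_derivative_eq_zero h2)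
      have h4 : (P (m+1) - EE (m+1)).eval 1 = 0 := by
        rw [eval_sub, hnorm, EE_eval_one, sub_self]
      rw [← hc, eval_C] at h4
      have h5 : P (m+1) - EE (m+1) = 0 := by rw [← hc, h4, map_zero]
      exact sub_eq_zero.mp h5
  intro k
  set f : ℕ → ℕ → ℝ :=
    fun n j => dd n j * ((-1:ℝ)^k * (j.choose k)) / (n.factorial : ℝ) with hf
  set g : ℕ → ℝ := fun j => (-1:ℝ)^k * (j.choose k) * ((-1:ℝ)^j / (j.factorial:ℝ)) with hg
  have hcoeff : ∀ n, (P n).coeff k / (n.factorial : ℝ) = ∑' j, f n j := by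
    intro n
    rw [hPE n, EE_coeff, Finset.sum_div]
    refine (tsum_eq_sum fun j hj => ?_).symm
    have : n < j := by simpa using Finset.mem_range.not.mp hj
    simp [hf, dd_zero this]
  have hpt : ∀ j, Tendsto (fun n => f n j) atTop (nhds (g j)) := by
    intro j
    have h := (Rlim j).const_mul ((-1:ℝ)^k * (j.choose k) * ((-1:ℝ)^j / (j.factorial:ℝ)))
    rw [mul_one] at h
    refine h.congr fun n => ?_
    simp only [hf, dd]
    ring
  have hbd : ∀ᶠ n in atTop, ∀ j, ‖f n j‖ ≤ (j.choose k : ℝ)/(j.factorial:ℝ) := by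
    filter_upwards with n
    intro j
    have hDF : (((n+1-j).descFactorial j : ℕ):ℝ) * (((n-j).factorial : ℕ):ℝ)
        ≤ ((n.factorial : ℕ):ℝ) := by exact_mod_cast bound_nat n j
    have heq : f n j = ((-1:ℝ)^(j+k)) *
        ((j.choose k : ℝ) * ((((n+1-j).descFactorial j : ℕ):ℝ) * (((n-j).factorial : ℕ):ℝ))
          / ((j.factorial:ℝ) * (n.factorial:ℝ))) := by
      simp only [hf, dd]
      ring
    rw [heq, norm_mul, norm_pow, norm_neg, norm_one, one_pow, one_mul, Real.norm_eq_abs,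
      abs_of_nonneg (by positivity)]
    calc (j.choose k : ℝ) * ((((n+1-j).descFactorial j : ℕ):ℝ) * (((n-j).factorial : ℕ):ℝ))
          / ((j.factorial:ℝ) * (n.factorial:ℝ))
        ≤ (j.choose k : ℝ) * ((n.factorial : ℕ):ℝ) / ((j.factorial:ℝ) * (n.factorial:ℝ)) := by
          gcongr
      _ = (j.choose k : ℝ)/(j.factorial:ℝ) := by
          rw [mul_comm ((j.factorial:ℕ):ℝ) _, ← div_div, mul_div_assoc, div_self
            (by exact_mod_cast Nat.factorial_ne_zero n), mul_one]
  have main := tendsto_tsum_of_dominated_convergence (summable_bound k) hpt hbd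
  have : (fun n => (P n).coeff k / (n.factorial : ℝ)) = fun n => ∑' j, f n j :=
    funext hcoeff
  rw [this, ← g_tsum k]
  exact main
end

section
/- Let (B_n) be the sequence of real polynomials defined by B_0(x) = x and B_n(x) = n·x·(x+1)·B_{n-1}(x) + x·(1-x²)·B_{n-1}'(x) for n ≥ 1. Then for every n ≥ 0 the polynomial B_n has degree n+1 and all its coefficients are nonnegative. -/
open Polynomial

lemma stmt14_aux3 (p : Polynomial ℝ) (c : ℝ) (k : ℕ) :
    (C c * X * (X+1) * p + X * (1 - X^2) * derivative p).coeff (k+3)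
    = (c - (k+1)) * p.coeff (k+1) + c * p.coeff (k+2) + (k+3) * p.coeff (k+3) := by
  have h : C c * X * (X+1) * p + X * (1 - X^2) * derivative p
      = C c * (X^2 * p) + C c * (X * p) + X * derivative p - X^3 * derivative p := by ring
  rw [h]
  have h1 : (X^2*p).coeff (k+3) = p.coeff (k+1) := coeff_X_pow_mul p 2 (k+1)
  have h2 : (X*p).coeff (k+3) = p.coeff (k+2) := coeff_X_mul p (k+2)
  have h3 : (X*derivative p).coeff (k+3) = (derivative p).coeff (k+2) := coeff_X_mul _ _
  have h4 : (X^3*derivative p).coeff (k+3) = (derivative p).coeff k := coeff_X_pow_mul _ 3 k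
  rw [coeff_sub, coeff_add, coeff_add, coeff_C_mul, coeff_C_mul, h1, h2, h3, h4,
    coeff_derivative, coeff_derivative]
  push_cast
  ring

lemma stmt14_aux_small (p : Polynomial ℝ) (c : ℝ) :
    (C c * X * (X+1) * p + X * (1 - X^2) * derivative p).coeff 0 = 0 ∧
    (C c * X * (X+1) * p + X * (1 - X^2) * derivative p).coeff 1 = c * p.coeff 0 + p.coeff 1 ∧
    (C c * X * (X+1) * p + X * (1 - X^2) * derivative p).coeff 2
      = c * p.coeff 0 + c * p.coeff 1 + 2 * p.coeff 2 := by
  have h : C c * X * (X+1) * p + X * (1 - X^2) * derivative p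
      = C c * (p * X^2) + C c * (p * X) + derivative p * X - derivative p * X^3 := by ring
  refine ⟨?_, ?_, ?_⟩ <;>
    · simp [h, coeff_mul_X_pow', coeff_derivative, coeff_mul_X]
      try ring

/-- Proposition `prop:roots` a): For the polynomials `B_0 = x`,
`B_n = n·x·(x+1)·B_{n-1} + x·(1-x²)·B_{n-1}'`, the polynomial `B_n` has degree `n+1`
and all its coefficients are nonnegative. -/
theorem stmt_14 (B : ℕ → Polynomial ℝ)
    (hB0 : B 0 = X)
    (hrec : ∀ n : ℕ, 1 ≤ n →
      B n = C (n : ℝ) * X * (X + 1) * B (n - 1) + X * (1 - X ^ 2) * derivative (B (n - 1))) :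
    ∀ n : ℕ, (B n).natDegree = n + 1 ∧ ∀ k : ℕ, 0 ≤ (B n).coeff k := by
  intro n
  induction n with
  | zero =>
    refine ⟨by rw [hB0]; simp, fun k => ?_⟩
    rw [hB0, coeff_X]
    split <;> norm_num
  | succ n ih =>
    obtain ⟨hdeg, hpos⟩ := ih
    set p := B n with hp
    set c : ℝ := ((n:ℝ) + 1) with hc
    have hrw : B (n+1) = C c * X * (X+1) * p + X * (1 - X^2) * derivative p := by
      have := hrec (n+1) (by omega)
      simpa [hc] using this
    obtain ⟨h0, h1, h2⟩ := stmt14_aux_small p c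
    have h3 := stmt14_aux3 p c
    -- vanishing of high coefficients of p
    have hz : ∀ m, n + 1 < m → p.coeff m = 0 := fun m hm =>
      coeff_eq_zero_of_natDegree_lt (hdeg ▸ hm)
    -- leading coefficient of p is positive
    have hlead : 0 < p.coeff (n+1) := by
      have hne : p ≠ 0 := fun h => by simp [h] at hdeg
      have : p.coeff (n+1) ≠ 0 := by
        rw [← hdeg]; exact coeff_ne_zero_of_eq_degree (degree_eq_natDegree hne)
      exact lt_of_le_of_ne (hpos _) (Ne.symm this)
    -- all coefficients of B (n+1) are nonnegative
    have hnonneg : ∀ k, 0 ≤ (B (n+1)).coeff k := by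
      intro k
      rw [hrw]
      match k with
      | 0 => rw [h0]
      | 1 =>
        rw [h1]
        have hc0 : (0:ℝ) ≤ c := by rw [hc]; positivity
        exact add_nonneg (mul_nonneg hc0 (hpos 0)) (hpos 1)
      | 2 =>
        rw [h2]
        have hc0 : (0:ℝ) ≤ c := by rw [hc]; positivity
        exact add_nonneg (add_nonneg (mul_nonneg hc0 (hpos 0)) (mul_nonneg hc0 (hpos 1)))
          (mul_nonneg (by positivity) (hpos 2))
      | (k+3) =>
        rw [h3 k]
        rcases le_or_gt (k+1) (n+1) with hk | hk
        · have hck : (0:ℝ) ≤ c - (k+1) := by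
            rw [hc]; push_cast
            have : (k:ℝ) + 1 ≤ (n:ℝ) + 1 := by exact_mod_cast hk
            linarith
          have hc0 : (0:ℝ) ≤ c := by rw [hc]; positivity
          exact add_nonneg (add_nonneg (mul_nonneg hck (hpos _)) (mul_nonneg hc0 (hpos _)))
            (mul_nonneg (by positivity) (hpos _))
        · rw [hz _ hk, hz _ (by omega), hz _ (by omega)]
          simp
    refine ⟨?_, hnonneg⟩
    -- high coefficients of B (n+1) vanish
    have hzQ : ∀ m, n + 2 < m → (B (n+1)).coeff m = 0 := by
      intro m hm
      obtain ⟨k, rfl⟩ : ∃ k, m = k + 3 := ⟨m - 3, by omega⟩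
      rw [hrw, h3 k]
      rcases eq_or_lt_of_le (show n + 1 ≤ k + 1 by omega) with hk | hk
      · have hk' : k = n := by omega
        rw [hz (k+2) (by omega), hz (k+3) (by omega)]
        have hcc : c - ((k:ℝ)+1) = 0 := by rw [hc, hk']; ring
        rw [hcc]
        ring
      · rw [hz _ hk, hz _ (by omega), hz _ (by omega)]
        ring
    -- coefficient at n+2 is positive
    have hQpos : (B (n+1)).coeff (n+2) ≠ 0 := by
      match n with
      | 0 =>
        rw [hrw, h2, hc]
        have h00 := hpos 0
        have h22 : p.coeff 2 = 0 := hz 2 (by omega)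
        have := hlead
        simp only [Nat.cast_zero] at this ⊢
        nlinarith
      | (n+1) =>
        have : n + 1 + 2 = n + 3 := by omega
        rw [this, hrw, h3 n]
        have h1' := hpos (n+1)
        have h2' := hlead
        have h3' : p.coeff (n+3) = 0 := hz _ (by omega)
        have hck : (0:ℝ) ≤ c - (n+1) := by
          rw [hc]; push_cast; linarith
        nlinarith
    have hle : (B (n+1)).natDegree ≤ n + 2 := natDegree_le_iff_coeff_eq_zero.mpr hzQ
    have hge : n + 2 ≤ (B (n+1)).natDegree := le_natDegree_of_ne_zero hQpos
    omega
end

section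
/- Let (B_n) be the sequence of real polynomials defined by B_0(x) = x and B_n(x) = n·x·(x+1)·B_{n-1}(x) + x·(1-x²)·B_{n-1}'(x) for n ≥ 1. Then for every n ≥ 0 the polynomial B_n has all roots real, and every root of B_n lies in the interval [-1, 0]; equivalently, B_n splits into linear factors over the reals and each of its roots γ satisfies -1 ≤ γ ≤ 0. -/
open Polynomial


lemma aux_deg (m : ℕ) (p : Polynomial ℝ) (hp : p.natDegree ≤ m) :
    (C (m:ℝ) * X * (X+1) * p + X*(1-X^2)*derivative p).natDegree ≤ m+1 := by
  apply natDegree_le_iff_coeff_eq_zero.mpr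
  intro k hk
  have hid : C (m:ℝ) * X * (X+1) * p + X*(1-X^2)*derivative p
      = C (m:ℝ) * (X^2 * p) + C (m:ℝ) * (X^1 * p) + X^1 * derivative p - X^3 * derivative p := by
    ring
  obtain ⟨j, rfl⟩ : ∃ j, k = j + 2 := ⟨k - 2, by omega⟩
  have hj : m ≤ j := by omega
  have hcz : ∀ l, m < l → p.coeff l = 0 := fun l hl => coeff_eq_zero_of_natDegree_lt (lt_of_le_of_lt hp hl)
  rw [hid]
  simp only [coeff_add, coeff_sub, coeff_C_mul, coeff_X_pow_mul']
  rcases Nat.eq_zero_or_pos j with rfl | hjpos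
  · -- j = 0, so m = 0, p is a constant
    have hm : m = 0 := by omega
    have : derivative p = 0 := by
      have := natDegree_eq_zero.mp (le_antisymm (hp.trans hm.le) (Nat.zero_le _))
      obtain ⟨a, rfl⟩ := this
      simp
    simp [this, hm, hcz 1 (by omega), hcz 2 (by omega)]
  · obtain ⟨i, rfl⟩ : ∃ i, j = i + 1 := ⟨j - 1, by omega⟩
    have h1 : (1:ℕ) ≤ i + 1 + 2 := by omega
    have h3 : (3:ℕ) ≤ i + 1 + 2 := by omega
    rw [if_pos h1, if_pos h1, if_pos h3, if_pos (show (2:ℕ) ≤ i+1+2 by omega)]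
    have e1 : i + 1 + 2 - 1 = i + 2 := by omega
    have e2 : i + 1 + 2 - 2 = i + 1 := by omega
    have e3 : i + 1 + 2 - 3 = i := by omega
    rw [e1, e2, e3, coeff_derivative, coeff_derivative]
    rcases eq_or_lt_of_le hj with heq | hlt
    · rw [hcz (i+2) (by omega), hcz (i+2+1) (by omega)]
      subst heq; push_cast; ring
    · rw [hcz (i+1) (by omega), hcz (i+2) (by omega), hcz (i+2+1) (by omega)]
      ring


lemma aux_rolle (N : ℕ) (p : Polynomial ℝ) {a b : ℝ} (hab : a < b) (hb : b < 1)
    (hpa : p.eval a = 0) (hpb : p.eval b = 0) :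
    ∃ c ∈ Set.Ioo a b, ((N:ℝ)+1) * p.eval c + (1 - c) * (derivative p).eval c = 0 := by
  set f : ℝ → ℝ := fun x => p.eval x / (1-x)^(N+1) with hf
  have hdiff : ∀ x : ℝ, x < 1 → HasDerivAt f
      (((derivative p).eval x * (1-x)^(N+1) - p.eval x * (((N:ℝ)+1) * (1-x)^N * (-1))) / ((1-x)^(N+1))^2) x := by
    intro x hx
    have hu : HasDerivAt (fun x : ℝ => p.eval x) ((derivative p).eval x) x := p.hasDerivAt x
    have hv : HasDerivAt (fun x : ℝ => (1-x)^(N+1)) (((N:ℝ)+1) * (1-x)^N * (-1)) x := by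
      have := ((hasDerivAt_id x).const_sub 1).pow (N+1)
      simpa [Pi.pow_def] using this
    exact hu.div hv (pow_ne_zero _ (by linarith))
  have hcont : ContinuousOn f (Set.Icc a b) := fun x hx =>
    ((hdiff x (lt_of_le_of_lt hx.2 hb)).continuousAt).continuousWithinAt
  have hfab : f a = f b := by simp [hf, hpa, hpb]
  obtain ⟨c, hc, hc0⟩ := exists_deriv_eq_zero hab hcont hfab
  refine ⟨c, hc, ?_⟩
  have hc1 : c < 1 := lt_trans hc.2 hb
  have h := (hdiff c hc1).deriv
  rw [hc0] at h
  have hnum : (derivative p).eval c * (1-c)^(N+1) - p.eval c * (((N:ℝ)+1) * (1-c)^N * (-1)) = 0 := by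
    rcases div_eq_zero_iff.mp h.symm with h' | h'
    · exact h'
    · exact absurd h' (pow_ne_zero _ (pow_ne_zero _ (by linarith)))
  have h9 : (1-c)^N * (((N:ℝ)+1) * p.eval c + (1-c)*(derivative p).eval c) = 0 := by
    linear_combination hnum
  exact (mul_eq_zero.mp h9).resolve_left (pow_ne_zero _ (by linarith))


lemma aux_roots (p : Polynomial ℝ) (hp : p ≠ 0) (S : Finset ℝ)
    (hd : p.natDegree ≤ S.card) (hr : ∀ x ∈ S, p.eval x = 0) :
    p.roots = S.val ∧ p.Splits := by
  classical
  have h1 : S.val ≤ p.roots := by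
    rw [Multiset.le_iff_count]
    intro a
    by_cases ha : a ∈ S
    · rw [count_roots]
      have : S.val.count a = 1 := Multiset.count_eq_one_of_mem S.nodup ha
      rw [this]
      exact (rootMultiplicity_pos hp).mpr (hr a ha)
    · simp [Multiset.count_eq_zero_of_notMem (by exact_mod_cast ha)]
  have hcard : Multiset.card p.roots ≤ S.card := (p.card_roots').trans hd
  have h2 : p.roots = S.val := by
    symm
    exact Multiset.eq_of_le_of_card_le h1 (by simpa using hcard)
  refine ⟨h2, ?_⟩
  rw [splits_iff_card_roots, h2]
  have : S.card = p.natDegree := le_antisymm (by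
    have := Multiset.card_le_card h1
    simpa using this.trans p.card_roots') hd
  simpa using this

/-- Proposition `prop:roots` b): For the polynomials `B_0 = x`,
`B_n = n·x·(x+1)·B_{n-1} + x·(1-x²)·B_{n-1}'`, every `B_n` splits into linear factors
over `ℝ` (all its roots are real) and each real root `γ` satisfies `-1 ≤ γ ≤ 0`. -/
theorem stmt_15 (B : ℕ → Polynomial ℝ)
    (hB0 : B 0 = X)
    (hrec : ∀ n : ℕ, 1 ≤ n →
      B n = C (n : ℝ) * X * (X + 1) * B (n - 1) + X * (1 - X ^ 2) * derivative (B (n - 1))) :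
    ∀ n : ℕ,
      (B n).Splits ∧
        ∀ γ : ℝ, (B n).IsRoot γ → -1 ≤ γ ∧ γ ≤ 0 := by
  classical
  have hdeg : ∀ n, (B n).natDegree ≤ n + 1 := by
    intro n
    induction n with
    | zero => rw [hB0]; simp [natDegree_X]
    | succ n ih =>
      have h := hrec (n+1) (by omega)
      simp only [Nat.add_sub_cancel] at h
      rw [h]
      have := aux_deg (n+1) (B n) ih
      push_cast at this ⊢
      exact this
  have hone : ∀ n, 0 < (B n).eval 1 := by
    intro n
    induction n with
    | zero => simp [hB0]
    | succ n ih =>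
      rw [hrec (n+1) (by omega)]
      simp only [Nat.add_sub_cancel, eval_add, eval_mul, eval_C, eval_X, eval_sub,
        eval_pow, eval_one]
      push_cast
      nlinarith [ih]
  have hne : ∀ n, B n ≠ 0 := by
    intro n h
    have := hone n
    rw [h] at this
    simp at this
  have hev0 : ∀ n : ℕ, 1 ≤ n → (B n).eval 0 = 0 := by
    intro n hn; rw [hrec n hn]; simp
  have hev1 : ∀ n : ℕ, 1 ≤ n → (B n).eval (-1) = 0 := by
    intro n hn; rw [hrec n hn]; norm_num
  have key : ∀ n : ℕ, ∃ S : Finset ℝ, S.card = n + 2 ∧ (∀ x ∈ S, -1 ≤ x ∧ x ≤ 0) ∧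
      (-1:ℝ) ∈ S ∧ (0:ℝ) ∈ S ∧ ∀ x ∈ S, (B (n+1)).eval x = 0 := by
    intro n
    induction n with
    | zero =>
      refine ⟨{-1, 0}, by norm_num, ?_, by simp, by simp, ?_⟩
      · intro x hx
        simp only [Finset.mem_insert, Finset.mem_singleton] at hx
        rcases hx with rfl | rfl <;> norm_num
      · intro x hx
        simp only [Finset.mem_insert, Finset.mem_singleton] at hx
        rcases hx with rfl | rfl
        · exact hev1 1 le_rfl
        · exact hev0 1 le_rfl
    | succ n ih =>
      obtain ⟨S, hcard, hbound, hm1, h0, hroot⟩ := ih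
      set e := S.orderIsoOfFin hcard with he
      set g : Fin (n+2) → ℝ := fun i => (e i : ℝ) with hg
      have hgS : ∀ i, g i ∈ S := fun i => (e i).2
      have hgmono : StrictMono g := fun i j hij => Subtype.coe_lt_coe.mpr (e.strictMono hij)
      have hstep : ∀ i : Fin (n+1),
          ∃ c ∈ Set.Ioo (g i.castSucc) (g i.succ), (B (n+2)).eval c = 0 := by
        intro i
        have hab : g i.castSucc < g i.succ := hgmono (Fin.castSucc_lt_succ (i := i))
        have hble : g i.succ ≤ 0 := (hbound _ (hgS i.succ)).2
        obtain ⟨c, hc, hceq⟩ := aux_rolle (n+1) (B (n+1)) hab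
          (lt_of_le_of_lt hble (by norm_num)) (hroot _ (hgS i.castSucc)) (hroot _ (hgS i.succ))
        refine ⟨c, hc, ?_⟩
        rw [hrec (n+2) (by omega)]
        simp only [Nat.add_sub_cancel, eval_add, eval_mul, eval_C, eval_X, eval_sub,
          eval_pow, eval_one]
        push_cast
        push_cast at hceq
        linear_combination (c*(c+1)) * hceq
      choose c hc hcz using hstep
      have hcmono : StrictMono c := by
        intro i j hij
        calc c i < g i.succ := (hc i).2
          _ ≤ g j.castSucc := hgmono.monotone (by
              rw [Fin.le_def]
              simp only [Fin.val_succ, Fin.coe_castSucc]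
              exact hij)
          _ < c j := (hc j).1
      have hcneg : ∀ i, c i < 0 := fun i => lt_of_lt_of_le (hc i).2 (hbound _ (hgS i.succ)).2
      have hcgt : ∀ i, -1 < c i := fun i => lt_of_le_of_lt (hbound _ (hgS i.castSucc)).1 (hc i).1
      have h0img : (0:ℝ) ∉ Finset.image c Finset.univ := by
        simp only [Finset.mem_image]
        rintro ⟨i, -, hi⟩
        exact absurd hi (ne_of_lt (hcneg i))
      have hm1ins : (-1:ℝ) ∉ insert 0 (Finset.image c Finset.univ) := by
        simp only [Finset.mem_insert, Finset.mem_image]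
        rintro (h | ⟨i, -, hi⟩)
        · norm_num at h
        · exact (hcgt i).ne' hi
      refine ⟨insert (-1) (insert 0 (Finset.image c Finset.univ)), ?_, ?_, ?_, ?_, ?_⟩
      · rw [Finset.card_insert_of_notMem hm1ins, Finset.card_insert_of_notMem h0img,
          Finset.card_image_of_injective _ hcmono.injective, Finset.card_univ,
          Fintype.card_fin]
      · intro x hx
        simp only [Finset.mem_insert, Finset.mem_image] at hx
        rcases hx with rfl | rfl | ⟨i, -, rfl⟩
        · norm_num
        · norm_num
        · exact ⟨le_of_lt (hcgt i), le_of_lt (hcneg i)⟩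
      · exact Finset.mem_insert_self _ _
      · exact Finset.mem_insert_of_mem (Finset.mem_insert_self _ _)
      · intro x hx
        simp only [Finset.mem_insert, Finset.mem_image] at hx
        rcases hx with rfl | rfl | ⟨i, -, rfl⟩
        · exact hev1 (n+2) (by omega)
        · exact hev0 (n+2) (by omega)
        · exact hcz i
  intro n
  cases n with
  | zero =>
    rw [hB0]
    refine ⟨Splits.X, ?_⟩
    intro γ hγ
    have : γ = 0 := by simpa [IsRoot] using hγ
    simp [this]
  | succ n =>
    obtain ⟨S, hcard, hbound, -, -, hroot⟩ := key n
    obtain ⟨hroots, hsplits⟩ := aux_roots (B (n+1)) (hne _) S (by rw [hcard]; exact hdeg (n+1)) hroot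
    refine ⟨hsplits, fun γ hγ => ?_⟩
    have hmem : γ ∈ (B (n+1)).roots := (mem_roots (hne _)).mpr hγ
    rw [hroots] at hmem
    exact hbound γ hmem
end

section
/- Let (A_n) be the sequence of real polynomials defined by A_0(x) = x and A_n(x) = (2n-1)·A_{n-1}(x) + x·(x-1)·A_{n-1}'(x) for n ≥ 1. Then for every n ≥ 0, A_n(1) = (2n)!/(2^n·n!) (the double factorial (2n-1)!!), and A_n'(1)/A_n(1) = 2^{2n}/C(2n,n), where C(2n,n) is the central binomial coefficient; that is, the random variable X_n with P(X_n = k) = [x^k]A_n(x)/A_n(1) has expected value E[X_n] = 2^{2n}/C(2n,n). -/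
open Polynomial

/-- For the memory-game polynomials `A_0 = x`,
`A_n = (2n-1)·A_{n-1} + x·(x-1)·A_{n-1}'`, one has `A_n(1) = (2n)!/(2^n·n!)`
(i.e. `(2n-1)!!`) and `A_n'(1)/A_n(1) = 2^{2n}/C(2n,n)` for every `n ≥ 0`. -/
theorem stmt_17 (A : ℕ → Polynomial ℝ)
    (hA0 : A 0 = X)
    (hrec : ∀ n : ℕ, 1 ≤ n →
      A n = C (2 * (n : ℝ) - 1) * A (n - 1) + X * (X - 1) * derivative (A (n - 1))) :
    ∀ n : ℕ,
      (A n).eval 1 = ((2 * n).factorial : ℝ) / (2 ^ n * (n.factorial : ℝ)) ∧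
        (derivative (A n)).eval 1 / (A n).eval 1 =
          2 ^ (2 * n) / ((2 * n).choose n : ℝ) := by
  have key : ∀ n : ℕ,
      (A n).eval 1 = ((2 * n).factorial : ℝ) / (2 ^ n * (n.factorial : ℝ)) ∧
      (derivative (A n)).eval 1 = 2 ^ n * (n.factorial : ℝ) := by
    intro n
    induction n with
    | zero => simp [hA0]
    | succ m ih =>
      have hr := hrec (m + 1) (by omega)
      simp only [Nat.add_sub_cancel] at hr
      have hm : (m.factorial : ℝ) ≠ 0 := by exact_mod_cast m.factorial_ne_zero
      constructor
      · rw [hr]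
        simp only [eval_add, eval_mul, eval_C, eval_X, eval_sub, eval_one, ih.1]
        have h2 : ((2 * (m + 1)).factorial : ℝ)
            = (2 * (m + 1)) * (2 * m + 1) * ((2 * m).factorial : ℝ) := by
          have : 2 * (m + 1) = (2 * m + 1) + 1 := by ring
          rw [this]
          push_cast [Nat.factorial_succ]
          ring
        rw [h2, show ((m + 1).factorial : ℝ) = ((m : ℝ) + 1) * m.factorial from by
          push_cast [Nat.factorial_succ]; ring]
        field_simp
        push_cast
        ring
      · have hd : derivative (A (m + 1)) =
            C (2 * ((m : ℝ) + 1) - 1) * derivative (A m)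
              + (derivative (X * (X - 1)) * derivative (A m)
                + X * (X - 1) * derivative (derivative (A m))) := by
          rw [hr]
          simp [derivative_mul]
        rw [hd]
        simp only [eval_add, eval_mul, eval_C, eval_X, eval_sub, eval_one, eval_zero, ih.2,
          derivative_mul, derivative_X, derivative_sub, derivative_one]
        push_cast [Nat.factorial_succ]
        ring
  intro n
  obtain ⟨h1, h2⟩ := key n
  refine ⟨h1, ?_⟩
  rw [h1, h2]
  have hf2 : ((2 * n).factorial : ℝ) ≠ 0 := by exact_mod_cast (2 * n).factorial_ne_zero
  have hfn : (n.factorial : ℝ) ≠ 0 := by exact_mod_cast n.factorial_ne_zero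
  have hcnat : (2 * n).choose n * n.factorial * n.factorial = (2 * n).factorial := by
    have h := Nat.choose_mul_factorial_mul_factorial (show n ≤ 2 * n by omega)
    simpa [show 2 * n - n = n from by omega] using h
  have hc : ((2 * n).choose n : ℝ) * (n.factorial : ℝ) * (n.factorial : ℝ)
      = ((2 * n).factorial : ℝ) := by exact_mod_cast hcnat
  have hcne : ((2 * n).choose n : ℝ) ≠ 0 := by
    have := Nat.choose_pos (show n ≤ 2 * n by omega)
    positivity
  field_simp
  rw [← hc, two_mul, pow_add]
  ring
end

section
/- Let (A_n) be the sequence of real polynomials defined by A_0(x) = x and A_n(x) = (2n-1)·A_{n-1}(x) + x·(x-1)·A_{n-1}'(x) for n ≥ 1. Then the expected value E[X_n] = A_n'(1)/A_n(1) = 2^{2n}/C(2n,n) satisfies E[X_n]/√(πn) → 1 as n → ∞; that is, A_n'(1)/A_n(1) is asymptotic to √(πn). -/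
open Polynomial Filter

lemma aux_eval (A : ℕ → Polynomial ℝ)
    (hA0 : A 0 = X)
    (hrec : ∀ n : ℕ, 1 ≤ n →
      A n = C (2 * (n : ℝ) - 1) * A (n - 1) + X * (X - 1) * derivative (A (n - 1))) :
    ∀ n : ℕ, (A n).eval 1 * (2 ^ n * (n.factorial : ℝ)) = ((2 * n).factorial : ℝ) ∧
      (derivative (A n)).eval 1 = 2 ^ n * (n.factorial : ℝ) := by
  intro n
  induction n with
  | zero => simp [hA0]
  | succ n ih =>
    obtain ⟨ih1, ih2⟩ := ih
    have h := hrec (n + 1) (by omega)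
    simp only [Nat.add_sub_cancel] at h
    constructor
    · rw [h]
      simp only [eval_add, eval_mul, eval_C, eval_X, eval_sub, sub_self, mul_zero, zero_mul,
        add_zero, eval_one, eval_zero]
      have : ((2 * (n + 1)).factorial : ℝ)
          = (2 * (n : ℝ) + 2) * ((2 * (n : ℝ) + 1) * ((2 * n).factorial : ℝ)) := by
        have : 2 * (n + 1) = (2 * n + 1) + 1 := by ring
        rw [this, Nat.factorial_succ, Nat.factorial_succ]
        push_cast; ring
      rw [this, ← ih1]
      push_cast [Nat.factorial_succ]
      ring
    · rw [h]
      simp only [derivative_add, derivative_mul, derivative_C, derivative_X, derivative_sub,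
        derivative_one, eval_add, eval_mul, eval_C, eval_X, eval_sub, eval_one, eval_zero]
      rw [ih2]
      push_cast [Nat.factorial_succ]
      ring

lemma choose_cast_eq (n : ℕ) :
    ((2 * n).choose n : ℝ) * ((n.factorial : ℝ) * (n.factorial : ℝ))
      = ((2 * n).factorial : ℝ) := by
  have h := Nat.choose_mul_factorial_mul_factorial (show n ≤ 2 * n by omega)
  rw [show 2 * n - n = n by omega] at h
  rw [← mul_assoc]
  exact_mod_cast h

lemma stirling_id (n : ℕ) (hn : 1 ≤ n) :
    ((2:ℝ) ^ (2*n) / ((2*n).choose n : ℝ)) / Real.sqrt (Real.pi * n)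
      = Stirling.stirlingSeq n ^ 2 / (Stirling.stirlingSeq (2*n) * Real.sqrt Real.pi) := by
  have hn0 : (0:ℝ) < n := by exact_mod_cast hn
  have he : (0:ℝ) < Real.exp 1 := Real.exp_pos 1
  have hp : ((n:ℝ) / Real.exp 1) ^ n ≠ 0 := by positivity
  have hsn : Real.sqrt n ≠ 0 := by positivity
  have hs2 : Real.sqrt 2 ≠ 0 := by positivity
  have hsπ : Real.sqrt Real.pi ≠ 0 := by positivity
  have hf : (n.factorial : ℝ) ≠ 0 := by positivity
  have hf2 : (((2*n).factorial) : ℝ) ≠ 0 := by positivity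
  have hc : ((2*n).choose n : ℝ) ≠ 0 := Nat.cast_ne_zero.mpr (Nat.choose_pos (by omega)).ne'
  have hch : ((2*n).choose n : ℝ) = ((2*n).factorial : ℝ) / (n.factorial * n.factorial) := by
    rw [eq_div_iff (by positivity)]; exact choose_cast_eq n
  have e1 : Real.sqrt (Real.pi * n) = Real.sqrt Real.pi * Real.sqrt n :=
    Real.sqrt_mul Real.pi_pos.le _
  have e2 : Real.sqrt (2 * (n:ℝ)) = Real.sqrt 2 * Real.sqrt n :=
    Real.sqrt_mul (by norm_num) _
  have e3 : Real.sqrt (2 * ((2*n : ℕ):ℝ)) = 2 * Real.sqrt n := by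
    push_cast
    rw [show (2:ℝ) * (2 * n) = 2^2 * n by ring, Real.sqrt_mul (by positivity),
      Real.sqrt_sq (by norm_num)]
  have e4 : (((2*n : ℕ):ℝ) / Real.exp 1) ^ (2*n) = 2^(2*n) * (((n:ℝ)/Real.exp 1)^n)^2 := by
    push_cast
    rw [show (2:ℝ) * n / Real.exp 1 = 2 * ((n:ℝ)/Real.exp 1) by ring, mul_pow,
      show 2*n = n*2 by ring]
    simp only [pow_mul]
  rw [hch]
  unfold Stirling.stirlingSeq
  rw [e1, e2, e3, e4]
  field_simp
  rw [Real.sq_sqrt (by norm_num : (0:ℝ) ≤ 2)]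

/-- For the memory-game polynomials `A_0 = x`,
`A_n = (2n-1)·A_{n-1} + x·(x-1)·A_{n-1}'`, the expected value
`E[X_n] = A_n'(1)/A_n(1) = 2^{2n}/C(2n,n)` is asymptotic to `√(πn)`:
`(A_n'(1)/A_n(1))/√(πn) → 1` as `n → ∞`. -/
theorem stmt_19 (A : ℕ → Polynomial ℝ)
    (hA0 : A 0 = X)
    (hrec : ∀ n : ℕ, 1 ≤ n →
      A n = C (2 * (n : ℝ) - 1) * A (n - 1) + X * (X - 1) * derivative (A (n - 1))) :
    (∀ n : ℕ, (derivative (A n)).eval 1 / (A n).eval 1 =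
        2 ^ (2 * n) / ((2 * n).choose n : ℝ)) ∧
      Tendsto
        (fun n : ℕ =>
          ((derivative (A n)).eval 1 / (A n).eval 1) / Real.sqrt (Real.pi * n))
        atTop (nhds 1) := by
  have hpart1 : ∀ n : ℕ, (derivative (A n)).eval 1 / (A n).eval 1 =
      2 ^ (2 * n) / ((2 * n).choose n : ℝ) := by
    intro n
    obtain ⟨h1, h2⟩ := aux_eval A hA0 hrec n
    have hf : (n.factorial : ℝ) ≠ 0 := by positivity
    have hf2 : (((2*n).factorial) : ℝ) ≠ 0 := by positivity
    have hc : ((2*n).choose n : ℝ) ≠ 0 := Nat.cast_ne_zero.mpr (Nat.choose_pos (by omega)).ne'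
    have ha : (A n).eval 1 = ((2*n).factorial : ℝ) / (2^n * n.factorial) := by
      rw [eq_div_iff (by positivity)]; exact h1
    rw [h2, ha, ← choose_cast_eq n]
    field_simp
    ring
  refine ⟨hpart1, ?_⟩
  have h2n : Tendsto (fun n : ℕ => 2*n) atTop atTop :=
    tendsto_atTop_mono (fun n => Nat.le_mul_of_pos_left n (by norm_num)) tendsto_id
  have hs : Tendsto Stirling.stirlingSeq atTop (nhds (Real.sqrt Real.pi)) :=
    Stirling.tendsto_stirlingSeq_sqrt_pi
  have hs2 : Tendsto (fun n => Stirling.stirlingSeq (2*n)) atTop (nhds (Real.sqrt Real.pi)) :=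
    hs.comp h2n
  have hsπ : Real.sqrt Real.pi ≠ 0 := by positivity
  have hlim : Tendsto (fun n => Stirling.stirlingSeq n ^ 2 /
      (Stirling.stirlingSeq (2*n) * Real.sqrt Real.pi)) atTop
      (nhds (Real.sqrt Real.pi ^ 2 / (Real.sqrt Real.pi * Real.sqrt Real.pi))) :=
    (hs.pow 2).div (hs2.mul tendsto_const_nhds) (by positivity)
  rw [Real.sq_sqrt Real.pi_pos.le, Real.mul_self_sqrt Real.pi_pos.le,
    div_self Real.pi_ne_zero] at hlim
  have : Tendsto (fun n : ℕ => ((2:ℝ) ^ (2*n) / ((2*n).choose n : ℝ)) /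
      Real.sqrt (Real.pi * n)) atTop (nhds 1) := by
    refine hlim.congr' ?_
    filter_upwards [eventually_ge_atTop 1] with n hn
    exact (stirling_id n hn).symm
  exact this.congr fun n => by rw [hpart1 n]
end
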